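/- Suppose sum_i s̲_i < sum_j d̄_j. Let (C̄, s, d) be a feasible demand-quasi-extreme scenario with free index k satisfying d̄_k < sum_i s_i - sum_{j != k} d_j. Then there exists a balanced feasible quasi-extreme scenario (C̄, s', d'), with sum_i s'_i = sum_j d'_j, such that f(C̄, s, d) <= f(C̄, s', d'). -/

import Mathlib

/-!
Raising the free demand `d k` to its upper bound keeps the scenario feasible, and the optimal
value of a transportation problem can only grow when supplies shrink or demands grow (scale an
optimal plan for the larger problem down column by column). It remains to balance the scenario
without leaving the box: either supplies drop from `s` towards `sl` until they meet the total
demand, or, if even `sl` is not enough, supplies sit at `sl` and demands rise towards `du`.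
Filling a prescribed total greedily inside a box leaves at most one coordinate strictly between
its endpoints, which is exactly quasi-extremality.
-/

open Finset

/-- A feasible transportation plan for supplies `s` and demands `d`. -/
def IsPlan {m n : ℕ} (s : Fin m → ℝ) (d : Fin n → ℝ) (x : Fin m → Fin n → ℝ) : Prop :=
  (∀ i j, 0 ≤ x i j) ∧ (∀ i, ∑ j, x i j ≤ s i) ∧ (∀ j, ∑ i, x i j = d j)

/-- Total transportation cost of a plan `x` under cost matrix `C`. -/
def cost {m n : ℕ} (C x : Fin m → Fin n → ℝ) : ℝ :=
  ∑ i, ∑ j, C i j * x i j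

/-- Optimal value of the transportation problem with data `(C, s, d)`. -/
noncomputable def optVal {m n : ℕ} (C : Fin m → Fin n → ℝ) (s : Fin m → ℝ)
    (d : Fin n → ℝ) : ℝ :=
  sInf (cost C '' {x | IsPlan s d x})

/-- A supply-demand vector is quasi-extreme if all its coordinates except at most
one (a supply coordinate, or a demand coordinate) lie at the interval endpoints. -/
def QuasiExtreme {m n : ℕ} (sl su s : Fin m → ℝ) (dl du : Fin n → ℝ)
    (d : Fin n → ℝ) : Prop :=
  (∃ k : Fin m, (∀ i, i ≠ k → s i = sl i ∨ s i = su i) ∧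
      (∀ j, d j = dl j ∨ d j = du j)) ∨
  (∃ k : Fin n, (∀ j, j ≠ k → d j = dl j ∨ d j = du j) ∧
      (∀ i, s i = sl i ∨ s i = su i))

section Endpoints

variable {ι : Type*}

def AtEndpoints (a b c : ι → ℝ) : Prop :=
  ∀ i, c i = a i ∨ c i = b i

def AtEndpointsExcept (a b c : ι → ℝ) (k : ι) : Prop :=
  ∀ i, i ≠ k → c i = a i ∨ c i = b i

theorem AtEndpointsExcept.trans {a b c l u : ι → ℝ} {k : ι} (h : AtEndpointsExcept a b c k)
    (ha : AtEndpoints l u a) (hb : AtEndpoints l u b) : AtEndpointsExcept l u c k := by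
  intro i hi
  rcases h i hi with e | e <;> rw [e]
  exacts [ha i, hb i]

theorem AtEndpointsExcept.update_upper [DecidableEq ι] {a b c : ι → ℝ} {k : ι}
    (h : AtEndpointsExcept a b c k) : AtEndpoints a b (Function.update c k (b k)) := by
  intro i
  by_cases hi : i = k
  · subst hi
    simp
  · simpa [hi] using h i hi

theorem Finset.exists_sum_eq_atEndpointsExcept [DecidableEq ι] [Nonempty ι] {a b : ι → ℝ}
    (hab : a ≤ b) (s : Finset ι) {T : ℝ} (haT : ∑ i ∈ s, a i ≤ T) (hTb : T ≤ ∑ i ∈ s, b i) :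
    ∃ c k, a ≤ c ∧ c ≤ b ∧ ∑ i ∈ s, c i = T ∧ AtEndpointsExcept a b c k := by
  induction s using Finset.induction_on generalizing T with
  | empty =>
    refine ⟨a, Classical.arbitrary ι, le_rfl, hab, ?_, fun i _ => Or.inl rfl⟩
    simp only [sum_empty] at haT hTb ⊢
    linarith
  | insert j s hj ih =>
    rw [sum_insert hj] at haT hTb
    simp only [sum_insert hj]
    rcases le_or_gt (T - ∑ i ∈ s, b i) (a j) with hlow | hlow
    · obtain ⟨c, k, hac, hcb, hsum, hend⟩ := ih (T := T - a j) (by linarith) (by linarith)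
      refine ⟨Function.update c j (a j), k, le_update_iff.mpr ⟨le_rfl, fun i _ => hac i⟩,
        update_le_iff.mpr ⟨hab j, fun i _ => hcb i⟩, ?_, fun i hi => ?_⟩
      · rw [sum_update_of_notMem hj, Function.update_self, hsum]
        ring
      · rcases eq_or_ne i j with rfl | hij
        · simp
        · simpa [hij] using hend i hi
    · refine ⟨Function.update b j (T - ∑ i ∈ s, b i), j,
        le_update_iff.mpr ⟨hlow.le, fun i _ => hab i⟩,
        update_le_iff.mpr ⟨by linarith, fun i _ => le_rfl⟩, ?_, fun i hi => by simp [hi]⟩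
      rw [sum_update_of_notMem hj, Function.update_self]
      ring

end Endpoints

section Transportation

variable {m n : ℕ}

theorem exists_isPlan_of_sum_eq {s : Fin m → ℝ} {d : Fin n → ℝ} (hs : 0 ≤ s) (hd : 0 ≤ d)
    (hbal : ∑ i, s i = ∑ j, d j) : ∃ x, IsPlan s d x := by
  by_cases hS : ∑ i, s i = 0
  · have hd0 : ∀ j, d j = 0 := fun j =>
      (sum_eq_zero_iff_of_nonneg fun j _ => hd j).mp (hbal ▸ hS) j (mem_univ j)
    exact ⟨0, fun _ _ => le_rfl, fun i => by simpa using hs i, fun j => by simp [hd0]⟩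
  · refine ⟨fun i j => s i * d j / ∑ i, s i,
      fun i j => div_nonneg (mul_nonneg (hs i) (hd j)) (sum_nonneg fun i _ => hs i),
      fun i => ?_, fun j => ?_⟩
    · rw [← sum_div, ← mul_sum, ← hbal, mul_div_cancel_right₀ _ hS]
    · rw [← sum_div, ← sum_mul, mul_div_cancel_left₀ _ hS]

theorem IsPlan.exists_le_of_le {s s' : Fin m → ℝ} {d d' : Fin n → ℝ} {x : Fin m → Fin n → ℝ}
    (hx : IsPlan s' d' x) (hs : s' ≤ s) (hd0 : 0 ≤ d) (hd : d ≤ d') :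
    ∃ y, IsPlan s d y ∧ ∀ i j, y i j ≤ x i j := by
  obtain ⟨hx0, hrow, hcol⟩ := hx
  have hratio0 : ∀ j, 0 ≤ d j / d' j := fun j => div_nonneg (hd0 j) ((hd0 j).trans (hd j))
  have hratio1 : ∀ j, d j / d' j ≤ 1 := fun j => div_le_one_of_le₀ (hd j) ((hd0 j).trans (hd j))
  have hle : ∀ i j, x i j * (d j / d' j) ≤ x i j := fun i j =>
    mul_le_of_le_one_right (hx0 i j) (hratio1 j)
  refine ⟨fun i j => x i j * (d j / d' j),
    ⟨fun i j => mul_nonneg (hx0 i j) (hratio0 j), fun i => ?_, fun j => ?_⟩, hle⟩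
  · exact ((sum_le_sum fun j _ => hle i j).trans (hrow i)).trans (hs i)
  · rw [← sum_mul, hcol j]
    rcases eq_or_ne (d' j) 0 with h | h
    · have : d j = 0 := le_antisymm (h ▸ hd j) (hd0 j)
      simp [h, this]
    · exact mul_div_cancel₀ _ h

theorem cost_mono {C x y : Fin m → Fin n → ℝ} (hC : ∀ i j, 0 ≤ C i j)
    (hxy : ∀ i j, x i j ≤ y i j) : cost C x ≤ cost C y :=
  sum_le_sum fun i _ => sum_le_sum fun j _ => mul_le_mul_of_nonneg_left (hxy i j) (hC i j)

theorem optVal_le_cost {C x : Fin m → Fin n → ℝ} {s : Fin m → ℝ} {d : Fin n → ℝ}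
    (hC : ∀ i j, 0 ≤ C i j) (hx : IsPlan s d x) : optVal C s d ≤ cost C x := by
  refine csInf_le ⟨0, ?_⟩ ⟨x, hx, rfl⟩
  rintro _ ⟨y, hy, rfl⟩
  simpa [cost] using cost_mono (x := 0) hC hy.1

theorem optVal_mono {C : Fin m → Fin n → ℝ} {s s' : Fin m → ℝ} {d d' : Fin n → ℝ}
    (hC : ∀ i j, 0 ≤ C i j) (hs : s' ≤ s) (hd0 : 0 ≤ d) (hd : d ≤ d')
    (hfeas : ∃ x, IsPlan s' d' x) : optVal C s d ≤ optVal C s' d' := by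
  obtain ⟨x₀, hx₀⟩ := hfeas
  refine le_csInf ⟨_, x₀, hx₀, rfl⟩ ?_
  rintro _ ⟨x, hx, rfl⟩
  obtain ⟨y, hy, hyx⟩ := hx.exists_le_of_le hs hd0 hd
  exact (optVal_le_cost hC hy).trans (cost_mono hC hyx)

end Transportation

theorem balanced_dominates_demand_case_general {m n : ℕ} (Cb : Fin m → Fin n → ℝ)
    (sl su s : Fin m → ℝ) (dl du d : Fin n → ℝ) (k : Fin n)
    (hCb : ∀ i j, 0 ≤ Cb i j)
    (hsl : ∀ i, 0 ≤ sl i) (hdl : ∀ j, 0 ≤ dl j)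
    (hslsu : ∀ i, sl i ≤ su i)
    (hinfeas : ∑ i, sl i < ∑ j, du j)
    (hsb : ∀ i, sl i ≤ s i ∧ s i ≤ su i)
    (hdb : ∀ j, dl j ≤ d j ∧ d j ≤ du j)
    (hqe : ∀ j, j ≠ k → d j = dl j ∨ d j = du j)
    (hqes : ∀ i, s i = sl i ∨ s i = su i)
    (hk : du k < ∑ i, s i - ∑ j ∈ Finset.univ.erase k, d j) :
    ∃ (s' : Fin m → ℝ) (d' : Fin n → ℝ),
      (∀ i, sl i ≤ s' i ∧ s' i ≤ su i) ∧ (∀ j, dl j ≤ d' j ∧ d' j ≤ du j) ∧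
      QuasiExtreme sl su s' dl du d' ∧ ∑ i, s' i = ∑ j, d' j ∧
      optVal Cb s d ≤ optVal Cb s' d' := by
  set a := Function.update d k (du k)
  have hd0 : 0 ≤ d := fun j => (hdl j).trans (hdb j).1
  have hda : d ≤ a := le_update_self_iff.mpr (hdb k).2
  have hdla : dl ≤ a := fun j => (hdb j).1.trans (hda j)
  have hadu : a ≤ du := update_le_iff.mpr ⟨le_rfl, fun j _ => (hdb j).2⟩
  have ha_end : AtEndpoints dl du a := AtEndpointsExcept.update_upper hqe
  have hsum_a : ∑ j, a j < ∑ i, s i := by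
    rw [sum_update_of_mem (mem_univ k), sdiff_singleton_eq_erase]
    linarith
  rcases le_or_gt (∑ i, sl i) (∑ j, a j) with hcase | hcase
  · obtain ⟨i₀, -, -⟩ := exists_lt_of_sum_lt (hcase.trans_lt hsum_a)
    have : Nonempty (Fin m) := ⟨i₀⟩
    obtain ⟨s', k', hsls', hs's, hsum, hend⟩ :=
      univ.exists_sum_eq_atEndpointsExcept (fun i => (hsb i).1) hcase hsum_a.le
    refine ⟨s', a, fun i => ⟨hsls' i, (hs's i).trans (hsb i).2⟩, fun j => ⟨hdla j, hadu j⟩,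
      Or.inl ⟨k', hend.trans (fun i => Or.inl rfl) hqes, ha_end⟩, hsum, ?_⟩
    exact optVal_mono hCb hs's hd0 hda
      (exists_isPlan_of_sum_eq (fun i => (hsl i).trans (hsls' i)) (hd0.trans hda) hsum)
  · have : Nonempty (Fin n) := ⟨k⟩
    obtain ⟨d', k', had', hd'du, hsum, hend⟩ :=
      univ.exists_sum_eq_atEndpointsExcept hadu hcase.le hinfeas.le
    refine ⟨sl, d', fun i => ⟨le_rfl, hslsu i⟩, fun j => ⟨(hdla j).trans (had' j), hd'du j⟩,
      Or.inr ⟨k', hend.trans ha_end (fun j => Or.inr rfl), fun i => Or.inl rfl⟩, hsum.symm, ?_⟩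
    exact optVal_mono hCb (fun i => (hsb i).1) hd0 (hda.trans had')
      (exists_isPlan_of_sum_eq hsl ((hd0.trans hda).trans had') hsum.symm)

/-- Theorem 3 (demand case): a feasible demand-quasi-extreme scenario whose free
demand cannot reach balance from above is dominated by a balanced feasible
quasi-extreme scenario. -/
theorem balanced_dominates_demand_case {m n : ℕ} (Cb : Fin m → Fin n → ℝ)
    (sl su s : Fin m → ℝ) (dl du d : Fin n → ℝ) (k : Fin n)
    (hCb : ∀ i j, 0 ≤ Cb i j)
    (hsl : ∀ i, 0 ≤ sl i) (hdl : ∀ j, 0 ≤ dl j)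
    (hslsu : ∀ i, sl i ≤ su i) (hdldu : ∀ j, dl j ≤ du j)
    (hinfeas : ∑ i, sl i < ∑ j, du j)
    (hsb : ∀ i, sl i ≤ s i ∧ s i ≤ su i)
    (hdb : ∀ j, dl j ≤ d j ∧ d j ≤ du j)
    (hqe : ∀ j, j ≠ k → d j = dl j ∨ d j = du j)
    (hqes : ∀ i, s i = sl i ∨ s i = su i)
    (hfeas : ∑ j, d j ≤ ∑ i, s i)
    (hk : du k < ∑ i, s i - ∑ j ∈ Finset.univ.erase k, d j) :
    ∃ (s' : Fin m → ℝ) (d' : Fin n → ℝ),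
      (∀ i, sl i ≤ s' i ∧ s' i ≤ su i) ∧ (∀ j, dl j ≤ d' j ∧ d' j ≤ du j) ∧
      QuasiExtreme sl su s' dl du d' ∧ ∑ i, s' i = ∑ j, d' j ∧
      optVal Cb s d ≤ optVal Cb s' d' :=
  balanced_dominates_demand_case_general Cb sl su s dl du d k hCb hsl hdl hslsu hinfeas hsb hdb hqe
    hqes hk
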